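/- In the DCMM model with H = ΞΛΞ^⊤ (Ξ = (ξ_1,…,ξ_K) orthonormal eigenvectors, Λ nonzero eigenvalues), suppose (ξ_1)_i ≠ 0 for all i and define R ∈ ℝ^{d×(K−1)} by R_{ik} = (ξ_{k+1})_i/(ξ_1)_i. Then for any two nodes i, j with identical membership vectors π_i = π_j (regardless of θ_i, θ_j), the corresponding rows of R are equal: r_i = r_j. -/
import Mathlib


open Matrix

/-- the SCORE ratio rows coincide for nodes with identical membership
vectors, regardless of their degree parameters. -/
theorem score_ratio_rows_equal
    {d K : ℕ} (h0 : 0 < K)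
    (θ : Fin d → ℝ) (hθ : ∀ i, 0 < θ i)
    (Pi : Matrix (Fin d) (Fin K) ℝ)
    (hPi_nonneg : ∀ i k, 0 ≤ Pi i k)
    (hPi_rows : ∀ i, ∑ k, Pi i k = 1)
    (hPi_rank : Pi.rank = K)
    (P : Matrix (Fin K) (Fin K) ℝ) (hP : P.PosDef)
    (H : Matrix (Fin d) (Fin d) ℝ)
    (hH : H = Matrix.diagonal θ * Pi * P * Piᵀ * Matrix.diagonal θ)
    (Ξ : Matrix (Fin d) (Fin K) ℝ) (Λ : Fin K → ℝ)
    (hΞ : Ξᵀ * Ξ = 1) (hΛ : ∀ k, Λ k ≠ 0)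
    (hdec : H = Ξ * Matrix.diagonal Λ * Ξᵀ)
    (hξ1 : ∀ i, Ξ i ⟨0, h0⟩ ≠ 0) :
    ∀ i j : Fin d, (∀ k, Pi i k = Pi j k) →
      ∀ k : Fin (K - 1),
        Ξ i ⟨k.val + 1, by omega⟩ / Ξ i ⟨0, h0⟩ =
          Ξ j ⟨k.val + 1, by omega⟩ / Ξ j ⟨0, h0⟩ := by
  -- H Ξ = Ξ Λ, hence Ξ = Θ Π B with B = P Πᵀ Θ Ξ Λ⁻¹
  have h1 : Ξ * Matrix.diagonal Λ = H * Ξ := by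
    rw [hdec, Matrix.mul_assoc, hΞ, Matrix.mul_one]
  have hinv : Matrix.diagonal Λ * Matrix.diagonal (fun k => (Λ k)⁻¹) = 1 := by
    rw [Matrix.diagonal_mul_diagonal]
    have : (fun k => Λ k * (Λ k)⁻¹) = fun _ => (1 : ℝ) :=
      funext fun k => mul_inv_cancel₀ (hΛ k)
    rw [this, Matrix.diagonal_one]
  set C : Matrix (Fin K) (Fin K) ℝ :=
    P * Piᵀ * Matrix.diagonal θ * Ξ * Matrix.diagonal (fun k => (Λ k)⁻¹) with hC
  have hXi : Ξ = Matrix.diagonal θ * (Pi * C) := by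
    calc Ξ = Ξ * (Matrix.diagonal Λ * Matrix.diagonal (fun k => (Λ k)⁻¹)) := by
            rw [hinv, Matrix.mul_one]
      _ = (Ξ * Matrix.diagonal Λ) * Matrix.diagonal (fun k => (Λ k)⁻¹) := by
            rw [Matrix.mul_assoc]
      _ = (H * Ξ) * Matrix.diagonal (fun k => (Λ k)⁻¹) := by rw [h1]
      _ = Matrix.diagonal θ * (Pi * C) := by
            rw [hH, hC]; simp only [Matrix.mul_assoc]
  intro i j hij k
  have key : ∀ (a : Fin d) (m : Fin K), Ξ a m = θ a * (Pi * C) a m := by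
    intro a m
    conv_lhs => rw [hXi]
    rw [Matrix.diagonal_mul]
  have hrow : ∀ m : Fin K, (Pi * C) i m = (Pi * C) j m := by
    intro m
    simp only [Matrix.mul_apply]
    exact Finset.sum_congr rfl fun l _ => by rw [hij l]
  rw [key i, key i, key j, key j, hrow, hrow,
    mul_div_mul_left _ _ (ne_of_gt (hθ i)), mul_div_mul_left _ _ (ne_of_gt (hθ j))]
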